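/- Define S_n(x,q) by S_0(x,q)=1 and S_{n+1}(x,q) = (q+nx)·S_n(x,q) + x(1-2x)·∂_x S_n(x,q). Then for all n ≥ 1, S_{2m}(x,-1) = (1-x)(1-2x)^{m-1} and S_{2m+1}(x,-1) = -(1-2x)^m. -/

import Mathlib

/-! Both formulas follow by a joint induction, one application of the recurrence at a time.
The operator `x(1-2x)∂_x` acts on `(1-2x)^k` as multiplication by `-2kx`, so at `q = -1` the
step from `S_{2k+1} = -(1-2x)^k` gives `(1 - (2k+1)x + 2kx)(1-2x)^k = (1-x)(1-2x)^k`, and the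
step from `S_{2k+2} = (1-x)(1-2x)^k` produces one more factor `1-2x`. -/

open Polynomial in
/-- The polynomials `S_n(x,q)` (for a fixed value of `q`), defined by `S_0(x,q) = 1` and
`S_{n+1}(x,q) = (q + n x)·S_n(x,q) + x(1-2x)·∂_x S_n(x,q)`. -/
noncomputable def Sq (q : ℝ) : ℕ → Polynomial ℝ
  | 0 => 1
  | n + 1 =>
      (Polynomial.C q + Polynomial.C (n : ℝ) * X) * Sq q n +
        X * (1 - 2 * X) * (Sq q n).derivative

namespace Polynomial

theorem mul_derivative_pow {R : Type*} [CommSemiring R] (p : R[X]) (m : ℕ) :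
    p * derivative (p ^ m) = m * derivative p * p ^ m := by
  cases m with
  | zero => simp
  | succ k => rw [derivative_pow_succ, ← Nat.cast_succ, C_eq_natCast, pow_succ]; ring

theorem one_sub_two_mul_X_mul_derivative_pow {R : Type*} [CommRing R] (k : ℕ) :
    (1 - 2 * X : R[X]) * derivative ((1 - 2 * X) ^ k) = -2 * (k : R[X]) * (1 - 2 * X) ^ k := by
  rw [mul_derivative_pow]
  simp only [derivative_sub, derivative_one, derivative_mul, derivative_ofNat, derivative_X]
  ring

end Polynomial

open Polynomial

lemma Sq_succ (q : ℝ) (n : ℕ) :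
    Sq q (n + 1) = (C q + C (n : ℝ) * X) * Sq q n + X * (1 - 2 * X) * derivative (Sq q n) :=
  rfl

lemma Sq_neg_one_two_mul_add_two {k : ℕ} (h : Sq (-1) (2 * k + 1) = -(1 - 2 * X) ^ k) :
    Sq (-1) (2 * k + 2) = (1 - X) * (1 - 2 * X) ^ k := by
  rw [Sq_succ, h, derivative_neg]
  simp only [map_neg, map_one, map_natCast]
  push_cast
  linear_combination (-X) * one_sub_two_mul_X_mul_derivative_pow (R := ℝ) k

lemma Sq_neg_one_two_mul_add_three {k : ℕ}
    (h : Sq (-1) (2 * k + 2) = (1 - X) * (1 - 2 * X) ^ k) :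
    Sq (-1) (2 * k + 3) = -(1 - 2 * X) ^ (k + 1) := by
  rw [Sq_succ, h, derivative_mul]
  simp only [map_neg, map_one, map_natCast, derivative_sub, derivative_one, derivative_X]
  push_cast
  linear_combination (X * (1 - X)) * one_sub_two_mul_X_mul_derivative_pow (R := ℝ) k

lemma Sq_neg_one_two_mul_add_one (m : ℕ) : Sq (-1) (2 * m + 1) = -(1 - 2 * X) ^ m := by
  induction m with
  | zero => simp [Sq]
  | succ k ih => exact Sq_neg_one_two_mul_add_three (Sq_neg_one_two_mul_add_two ih)

/-- For all `n ≥ 1`: `S_{2m}(x,-1) = (1-x)(1-2x)^{m-1}` and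
`S_{2m+1}(x,-1) = -(1-2x)^m`. -/
theorem stmt16 :
    (∀ m : ℕ, 1 ≤ m → Sq (-1) (2 * m) = (1 - X) * (1 - 2 * X) ^ (m - 1)) ∧
    (∀ m : ℕ, Sq (-1) (2 * m + 1) = -((1 - 2 * X) ^ m)) := by
  refine ⟨fun m hm => ?_, Sq_neg_one_two_mul_add_one⟩
  obtain ⟨k, rfl⟩ := Nat.exists_eq_add_of_le' hm
  exact Sq_neg_one_two_mul_add_two (Sq_neg_one_two_mul_add_one k)
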